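/- arXiv:2006.11822 — 2 statements merged into one kernel-verified Lean document; each statement's English description precedes it below -/
import Mathlib

section
/- Let M be an 𝕆-bimodule and m ∈ M an associative element (i.e., [p,q,m] = 0 for all p,q ∈ 𝕆). Then for all octonions u, v, w: [u, v, mw] = m·[u,v,w], and u(v(mw)) = (uv)(mw) - m[u,v,w]. -/
noncomputable section

open Quaternion

/-- The octonions, via the Cayley–Dickson construction on the quaternions. -/
def Octonion : Type := ℍ[ℝ] × ℍ[ℝ]

namespace Octonion

instance : AddCommGroup Octonion := inferInstanceAs (AddCommGroup (ℍ[ℝ] × ℍ[ℝ]))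
instance : Module ℝ Octonion := inferInstanceAs (Module ℝ (ℍ[ℝ] × ℍ[ℝ]))

instance : One Octonion := ⟨((1 : ℍ[ℝ]), (0 : ℍ[ℝ]))⟩
instance : Mul Octonion :=
  ⟨fun x y => (x.1 * y.1 - star y.2 * x.2, y.2 * x.1 + x.2 * star y.1)⟩
/-- Octonionic conjugation. -/
instance : Star Octonion := ⟨fun x => (star x.1, -x.2)⟩

/-- The associator `[a,b,c] = (ab)c - a(bc)`. -/
def assoc (a b c : Octonion) : Octonion := a * b * c - a * (b * c)

/-- The standard imaginary units `e 0 = e₁, …, e 6 = e₇`. -/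
def e : Fin 7 → Octonion
  | 0 => ((⟨0,1,0,0⟩ : ℍ[ℝ]), 0)
  | 1 => ((⟨0,0,1,0⟩ : ℍ[ℝ]), 0)
  | 2 => ((⟨0,0,0,1⟩ : ℍ[ℝ]), 0)
  | 3 => (0, (1 : ℍ[ℝ]))
  | 4 => (0, (⟨0,1,0,0⟩ : ℍ[ℝ]))
  | 5 => (0, (⟨0,0,1,0⟩ : ℍ[ℝ]))
  | 6 => (0, (⟨0,0,0,1⟩ : ℍ[ℝ]))

end Octonion

/-- A left `𝕆`-module: a real vector space with an `ℝ`-bilinear octonion action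
satisfying `1 • m = m` and the alternating rule. -/
structure LeftOModule (M : Type) [AddCommGroup M] [Module ℝ M] where
  smul : Octonion →ₗ[ℝ] M →ₗ[ℝ] M
  one_smul : ∀ m : M, smul 1 m = m
  alt : ∀ (p q : Octonion) (m : M),
    smul (p * q) m - smul p (smul q m) = -(smul (q * p) m - smul q (smul p m))

/-- An `𝕆`-bimodule: compatible left and right `𝕆`-module structures with
`[p,q,m] = [q,m,p] = [m,p,q]`.  Here `l p m` is `p * m` and `r p m` is `m * p`. -/
structure OBimodule (M : Type) [AddCommGroup M] [Module ℝ M] where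
  l : Octonion →ₗ[ℝ] M →ₗ[ℝ] M
  r : Octonion →ₗ[ℝ] M →ₗ[ℝ] M
  one_l : ∀ m : M, l 1 m = m
  one_r : ∀ m : M, r 1 m = m
  /-- left alternating rule `[p,q,m] = -[q,p,m]` -/
  alt_l : ∀ (p q : Octonion) (m : M),
    l (p * q) m - l p (l q m) = -(l (q * p) m - l q (l p m))
  /-- right alternating rule `[m,p,q] = -[m,q,p]` -/
  alt_r : ∀ (p q : Octonion) (m : M),
    r q (r p m) - r (p * q) m = -(r p (r q m) - r (q * p) m)
  /-- `[p,q,m] = [q,m,p]` -/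
  comp_lm : ∀ (p q : Octonion) (m : M),
    l (p * q) m - l p (l q m) = r p (l q m) - l q (r p m)
  /-- `[p,q,m] = [m,p,q]` -/
  comp_rm : ∀ (p q : Octonion) (m : M),
    l (p * q) m - l p (l q m) = r q (r p m) - r (p * q) m

/-! For an associative element `m` the bimodule axiom `[p,q,m] = [m,p,q]` makes the right
action multiplicative on `m`, i.e. `(mp)q = m(pq)`. Then `[u,v,mw] = [mw,u,v]` unfolds to
`m((wu)v) - m(w(uv)) = m[w,u,v]`, and the octonion associator is invariant under cyclic
permutation. -/

namespace Octonion

lemma fst_mul (x y : Octonion) : (x * y).1 = x.1 * y.1 - star y.2 * x.2 := rfl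

lemma snd_mul (x y : Octonion) : (x * y).2 = y.2 * x.1 + x.2 * star y.1 := rfl

lemma fst_sub (x y : Octonion) : (x - y).1 = x.1 - y.1 := rfl

lemma snd_sub (x y : Octonion) : (x - y).2 = x.2 - y.2 := rfl

theorem assoc_cycle (u v w : Octonion) : assoc u v w = assoc w u v := by
  refine Prod.ext ?_ ?_ <;>
  · simp only [assoc, fst_sub, snd_sub, fst_mul, snd_mul]
    ext <;>
    simp only [Quaternion.re_mul, Quaternion.imI_mul, Quaternion.imJ_mul,
      Quaternion.imK_mul, Quaternion.re_sub, Quaternion.imI_sub, Quaternion.imJ_sub,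
      Quaternion.imK_sub, Quaternion.re_add, Quaternion.imI_add, Quaternion.imJ_add,
      Quaternion.imK_add, Quaternion.re_star, Quaternion.imI_star, Quaternion.imJ_star,
      Quaternion.imK_star] <;> ring

end Octonion

namespace OBimodule

variable {M : Type} [AddCommGroup M] [Module ℝ M] (B : OBimodule M)

def IsAssocElt (m : M) : Prop := ∀ p q : Octonion, B.l (p * q) m = B.l p (B.l q m)

variable {B}

theorem IsAssocElt.r_r_eq_r_mul {m : M} (hm : B.IsAssocElt m) (p q : Octonion) :
    B.r q (B.r p m) = B.r (p * q) m := by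
  have h := B.comp_rm p q m
  rw [hm p q, sub_self, eq_comm, sub_eq_zero] at h
  exact h

theorem IsAssocElt.leftAssoc_r_eq_r_assoc {m : M} (hm : B.IsAssocElt m) (u v w : Octonion) :
    B.l (u * v) (B.r w m) - B.l u (B.l v (B.r w m)) = B.r (Octonion.assoc u v w) m := by
  rw [B.comp_rm, hm.r_r_eq_r_mul, hm.r_r_eq_r_mul, hm.r_r_eq_r_mul,
    Octonion.assoc_cycle u v w, Octonion.assoc, map_sub, LinearMap.sub_apply]

end OBimodule

/-- For an associative element `m` of an `𝕆`-bimodule: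
`[u,v,mw] = m·[u,v,w]` and `u(v(mw)) = (uv)(mw) - m[u,v,w]`. -/
theorem bimodule_assoc_elt_assoc_formula {M : Type} [AddCommGroup M] [Module ℝ M]
    (B : OBimodule M) (m : M)
    (hm : ∀ p q : Octonion, B.l (p * q) m = B.l p (B.l q m))
    (u v w : Octonion) :
    B.l (u * v) (B.r w m) - B.l u (B.l v (B.r w m)) = B.r (Octonion.assoc u v w) m ∧
    B.l u (B.l v (B.r w m)) = B.l (u * v) (B.r w m) - B.r (Octonion.assoc u v w) m := by
  have h := OBimodule.IsAssocElt.leftAssoc_r_eq_r_assoc hm u v w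
  exact ⟨h, by rw [← h, sub_sub_cancel]⟩
end
end

section
/- The left 𝕆-module 𝕆̄ (with action p ⋆ m = p̄m) admits no right 𝕆-module action making it an 𝕆-bimodule. -/
noncomputable section

open Quaternion

/-! Put `d = 1·p` for `p = e₁`. The identity `[p,q,m] = [q,m,p]` at `m = 1` shows that the
right action of `p` is `m·p = m p̄ - p̄ m + m d`, and at general `m` it gives
`[a,m,d] = [a,p̄,m] - [a,m,p̄]`, which by alternativity of `𝕆` says that `d + 2p̄` lies in the
nucleus `ℝ` of `𝕆`. So `d = t + 2p` with `t` real, which commutes with `p`. Now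
`[p,p,1] = [1,p,p]` gives `d·p = 1·p² = -1`, while the formula for the right action gives
`d·p = d² = t² - 4 + 4tp`. -/

namespace Octonion

def fst (a : Octonion) : ℍ[ℝ] := Prod.fst (show ℍ[ℝ] × ℍ[ℝ] from a)
def snd (a : Octonion) : ℍ[ℝ] := Prod.snd (show ℍ[ℝ] × ℍ[ℝ] from a)

@[ext] theorem ext {a b : Octonion} (h₁ : a.fst = b.fst) (h₂ : a.snd = b.snd) : a = b :=
  Prod.ext h₁ h₂

section Components
variable (a b : Octonion)

@[simp] theorem fst_zero : (0 : Octonion).fst = 0 := rfl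
@[simp] theorem snd_zero : (0 : Octonion).snd = 0 := rfl
@[simp] theorem fst_one : (1 : Octonion).fst = 1 := rfl
@[simp] theorem snd_one : (1 : Octonion).snd = 0 := rfl
@[simp] theorem fst_add : (a + b).fst = a.fst + b.fst := rfl
@[simp] theorem snd_add : (a + b).snd = a.snd + b.snd := rfl
@[simp] theorem fst_neg : (-a).fst = -a.fst := rfl
@[simp] theorem snd_neg : (-a).snd = -a.snd := rfl
@[simp] theorem fst_sub_s15 : (a - b).fst = a.fst - b.fst := rfl
@[simp] theorem snd_sub_s15 : (a - b).snd = a.snd - b.snd := rfl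
@[simp] theorem fst_smul (t : ℝ) : (t • a).fst = t • a.fst := rfl
@[simp] theorem snd_smul (t : ℝ) : (t • a).snd = t • a.snd := rfl
@[simp] theorem fst_mul_s15 : (a * b).fst = a.fst * b.fst - star b.snd * a.snd := rfl
@[simp] theorem snd_mul_s15 : (a * b).snd = b.snd * a.fst + a.snd * star b.fst := rfl
@[simp] theorem fst_star : (star a).fst = star a.fst := rfl
@[simp] theorem snd_star : (star a).snd = -a.snd := rfl

end Components

/- The quaternion literals in `e` have type `ℍ[ℝ,-1,0,-1]`, which the `ℍ[ℝ]` simp lemmas do not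
match, so the units are described by their real coordinates. -/
@[simp] theorem e_zero_coords : (e 0).fst.re = 0 ∧ (e 0).fst.imI = 1 ∧ (e 0).fst.imJ = 0 ∧
    (e 0).fst.imK = 0 ∧ (e 0).snd = 0 := ⟨rfl, rfl, rfl, rfl, rfl⟩
@[simp] theorem e_one_coords : (e 1).fst.re = 0 ∧ (e 1).fst.imI = 0 ∧ (e 1).fst.imJ = 1 ∧
    (e 1).fst.imK = 0 ∧ (e 1).snd = 0 := ⟨rfl, rfl, rfl, rfl, rfl⟩
@[simp] theorem e_three_coords : (e 3).fst = 0 ∧ (e 3).snd = 1 := ⟨rfl, rfl⟩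

instance : NonAssocRing Octonion where
  __ := (inferInstance : AddCommGroup Octonion)
  __ := (inferInstance : One Octonion)
  __ := (inferInstance : Mul Octonion)
  left_distrib a b c := by ext <;> simp [mul_add, add_mul] <;> abel
  right_distrib a b c := by ext <;> simp [mul_add, add_mul] <;> abel
  zero_mul a := by ext <;> simp
  mul_zero a := by ext <;> simp
  one_mul a := by ext <;> simp
  mul_one a := by ext <;> simp

instance : StarRing Octonion where
  star_involutive a := by ext <;> simp
  star_mul a b := by ext <;> simp
  star_add a b := by ext <;> simp <;> abel

theorem e_zero_mul_self : e 0 * e 0 = -1 := by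
  ext <;> simp

theorem assoc_add_right (a b c c' : Octonion) :
    assoc a b (c + c') = assoc a b c + assoc a b c' := by
  simp only [assoc, mul_add]
  abel

theorem assoc_swap (a b c : Octonion) : assoc a c b = -assoc a b c := by
  rw [eq_neg_iff_add_eq_zero]
  ext <;> simp only [assoc, fst_add, snd_add, fst_sub_s15, snd_sub_s15, fst_mul_s15, snd_mul_s15, fst_zero,
      snd_zero, re_add, imI_add, imJ_add, imK_add, re_sub, imI_sub, imJ_sub, imK_sub, re_mul,
      imI_mul, imJ_mul, imK_mul, re_star, imI_star, imJ_star, imK_star, re_zero, imI_zero,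
      imJ_zero, imK_zero] <;>
    ring

theorem exists_eq_smul_one_of_forall_assoc_eq_zero {c : Octonion}
    (h : ∀ a b, assoc a b c = 0) : ∃ t : ℝ, c = t • 1 := by
  have h₁ := h (e 0) (e 1)
  have h₂ := h (e 0) (e 3)
  have h₃ := h (e 1) (e 3)
  refine ⟨c.fst.re, ?_⟩
  ext <;> simp [Octonion.ext_iff, Quaternion.ext_iff, assoc] at h₁ h₂ h₃ ⊢ <;> linarith

end Octonion

open Octonion

namespace OBimodule

variable (B : OBimodule Octonion)

theorem r_apply_of_l_eq_star_mul (hl : ∀ p m, B.l p m = star p * m) (p x : Octonion) :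
    B.r p x = x * star p - star p * x + x * B.r p 1 := by
  have h := B.comp_lm p (star x) 1
  simp only [hl, star_mul, star_star, mul_one] at h
  rw [h, sub_add_cancel]

theorem assoc_r_one_of_l_eq_star_mul (hl : ∀ p m, B.l p m = star p * m) (p a m : Octonion) :
    assoc a m (B.r p 1) = assoc a (star p) m - assoc a m (star p) := by
  have h := B.comp_lm p (star a) m
  simp only [hl, star_mul, star_star] at h
  rw [B.r_apply_of_l_eq_star_mul hl p (a * m), B.r_apply_of_l_eq_star_mul hl p m, mul_add,
    mul_sub] at h
  rw [eq_comm, ← sub_eq_zero] at h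
  rw [← sub_eq_zero]
  convert h using 1
  simp only [assoc]
  abel

theorem exists_r_one_eq_of_l_eq_star_mul (hl : ∀ p m, B.l p m = star p * m) (p : Octonion) :
    ∃ t : ℝ, B.r p 1 = t • 1 - 2 • star p := by
  obtain ⟨t, ht⟩ := exists_eq_smul_one_of_forall_assoc_eq_zero (c := B.r p 1 + 2 • star p)
    fun a m => by
    rw [two_nsmul, ← add_assoc, assoc_add_right, assoc_add_right,
      B.assoc_r_one_of_l_eq_star_mul hl, assoc_swap a m]
    abel
  exact ⟨t, eq_sub_of_add_eq ht⟩

theorem r_r_one_of_l_eq_star_mul (hl : ∀ p m, B.l p m = star p * m) (p : Octonion) :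
    B.r p (B.r p 1) = B.r (p * p) 1 := by
  have h := B.comp_rm p p 1
  simp only [hl, star_mul, mul_one, sub_self] at h
  exact sub_eq_zero.mp h.symm

end OBimodule

/-- The conjugate left `𝕆`-module `𝕆̄` (left action `p ⋆ m = p̄m`) admits no
right action making it an `𝕆`-bimodule. -/
theorem conj_module_no_bimodule :
    ¬ ∃ B : OBimodule Octonion, ∀ p m : Octonion, B.l p m = star p * m := by
  rintro ⟨B, hl⟩
  obtain ⟨t, ht⟩ := B.exists_r_one_eq_of_l_eq_star_mul hl (e 0)
  have h := B.r_r_one_of_l_eq_star_mul hl (e 0)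
  rw [B.r_apply_of_l_eq_star_mul hl, ht, e_zero_mul_self, map_neg, LinearMap.neg_apply, B.one_r,
    two_nsmul] at h
  norm_num [Octonion.ext_iff, Quaternion.ext_iff] at h
  obtain ⟨hre, himI⟩ := h
  nlinarith
end
end
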